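/- Suppose the excess entropy E = Σ_{L=1}^∞ [h_μ(L) - h_μ] converges. Then the series Σ_{L=2}^∞ (L-1)·[H(L) - 2H(L-1) + H(L-2)] converges and E = -Σ_{L=2}^∞ (L-1)·[H(L) - 2H(L-1) + H(L-2)]; that is, the excess entropy is the predictability-gain-weighted average block length. -/

import Mathlib

/-!
Put `Δ L = H(L+1) - H(L) - h`. By stationarity, `Δ L - Δ (L+1)` is the conditional mutual
information between the first and the last symbol of an `(L+2)`-block given the `L` symbols
in between, so `Δ` is nonincreasing. A nonincreasing sequence with convergent series is
nonnegative and satisfies `n Δ n → 0`, and summation by parts gives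
`∑_{L<N} (L+1) (Δ(L+1) - Δ L) = N Δ N - ∑_{L<N} Δ L → -E`; the summand on the left is
exactly `(L+1) (H(L+2) - 2 H(L+1) + H(L))`.
-/

open MeasureTheory Real Filter

noncomputable def cylP {A : Type*} [MeasurableSpace A] (μ : Measure (ℕ → A)) {L : ℕ}
    (w : Fin L → A) : ℝ :=
  (μ {x : ℕ → A | ∀ i : Fin L, x i.1 = w i}).toReal

/-- Terms with `cylP μ w = 0` contribute `0`, since `Real.logb 2 0 = 0`. -/
noncomputable def blockH {A : Type*} [MeasurableSpace A] [Fintype A]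
    (μ : Measure (ℕ → A)) (L : ℕ) : ℝ :=
  -∑ w : Fin L → A, cylP μ w * Real.logb 2 (cylP μ w)

def shift {A : Type*} : (ℕ → A) → (ℕ → A) := fun x n => x (n + 1)

open Finset Topology

theorem sum_range_natCast_add_one_mul_sub (a : ℕ → ℝ) (N : ℕ) :
    ∑ L ∈ range N, ((L : ℝ) + 1) * (a (L + 1) - a L) = N * a N - ∑ L ∈ range N, a L := by
  induction N with
  | zero => simp
  | succ N ih =>
    rw [sum_range_succ, sum_range_succ, ih]
    push_cast
    ring

section Sequences

variable {a : ℕ → ℝ} {E : ℝ}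

theorem tendsto_zero_of_tendsto_sum_range
    (hE : Tendsto (fun N ↦ ∑ L ∈ range N, a L) atTop (𝓝 E)) : Tendsto a atTop (𝓝 0) := by
  simpa [sum_range_succ_sub_sum] using ((tendsto_add_atTop_iff_nat 1).2 hE).sub hE

namespace Antitone

theorem natCast_mul_le_two_mul_sum_Ico {n : ℕ} (ha : Antitone a) (h0 : 0 ≤ a n) :
    (n : ℝ) * a n ≤ 2 * ∑ L ∈ Ico (n / 2) n, a L := by
  have hcard : (n : ℝ) ≤ 2 * (#(Ico (n / 2) n) : ℕ) := by
    rw [Nat.card_Ico]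
    exact_mod_cast (by omega : n ≤ 2 * (n - n / 2))
  have hsum : (#(Ico (n / 2) n) : ℝ) * a n ≤ ∑ L ∈ Ico (n / 2) n, a L := by
    simpa using card_nsmul_le_sum _ a (a n) fun L hL ↦ ha (mem_Ico.1 hL).2.le
  nlinarith

variable (ha : Antitone a) (hE : Tendsto (fun N ↦ ∑ L ∈ range N, a L) atTop (𝓝 E))
include ha hE

theorem nonneg_of_tendsto_sum_range (n : ℕ) : 0 ≤ a n :=
  ha.le_of_tendsto (tendsto_zero_of_tendsto_sum_range hE) n

/-- The `n - n/2` terms between `n/2` and `n` are each at least `a n` and sum to a tail of the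
series. -/
theorem tendsto_natCast_mul_of_tendsto_sum_range :
    Tendsto (fun n : ℕ ↦ (n : ℝ) * a n) atTop (𝓝 0) := by
  have htail : Tendsto (fun n ↦ 2 * ∑ L ∈ Ico (n / 2) n, a L) atTop (𝓝 0) := by
    have hhalf : Tendsto (fun n : ℕ ↦ n / 2) atTop atTop :=
      Nat.tendsto_div_const_atTop two_ne_zero
    simpa [sum_Ico_eq_sub _ (Nat.div_le_self _ 2)] using
      (hE.sub (hE.comp hhalf)).const_mul 2
  refine tendsto_of_tendsto_of_tendsto_of_le_of_le tendsto_const_nhds htail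
    (fun n ↦ mul_nonneg n.cast_nonneg (ha.nonneg_of_tendsto_sum_range hE n))
    (fun n ↦ ha.natCast_mul_le_two_mul_sum_Ico (ha.nonneg_of_tendsto_sum_range hE n))

theorem tendsto_sum_range_natCast_add_one_mul_sub :
    Tendsto (fun N ↦ ∑ L ∈ range N, ((L : ℝ) + 1) * (a (L + 1) - a L)) atTop (𝓝 (-E)) := by
  simp_rw [sum_range_natCast_add_one_mul_sub]
  simpa using (ha.tendsto_natCast_mul_of_tendsto_sum_range hE).sub hE

end Antitone

end Sequences

theorem sub_mul_div_le_mul_log {p q r s : ℝ} (hp : 0 ≤ p) (hpq : p ≤ q) (hpr : p ≤ r)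
    (hqs : q ≤ s) : p - q * r / s ≤ p * (log p + log s - log q - log r) := by
  rcases hp.eq_or_lt with rfl | hp
  · simpa using div_nonneg (mul_nonneg hpq hpr) (hpq.trans hqs)
  have hq := hp.trans_le hpq
  have hr := hp.trans_le hpr
  have hs := hq.trans_le hqs
  have hlog : log (q * r / (p * s)) = log q + log r - log p - log s := by
    rw [log_div (by positivity) (by positivity), log_mul hq.ne' hr.ne', log_mul hp.ne' hs.ne']
    ring
  have hle := mul_le_mul_of_nonneg_left
    (log_le_sub_one_of_pos (by positivity : 0 < q * r / (p * s))) hp.le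
  have hcancel : p * (q * r / (p * s) - 1) = q * r / s - p := by
    field_simp
  rw [hlog, hcancel] at hle
  linarith

theorem Fin.tail_snoc_eq_snoc_tail {β : Type*} {n : ℕ} (q : Fin (n + 1) → β) (b : β) :
    Fin.tail (Fin.snoc q b : Fin (n + 2) → β) = Fin.snoc (Fin.tail q) b := by
  conv_lhs => rw [← Fin.cons_self_tail q, ← Fin.cons_snoc_eq_snoc_cons]
  rfl

theorem Fin.sum_univ_pi_succ_eq_sum_snoc {A M : Type*} [Fintype A] [AddCommMonoid M] {n : ℕ}
    (f : (Fin (n + 1) → A) → M) :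
    ∑ u, f u = ∑ v : Fin n → A, ∑ b, f (Fin.snoc v b) := by
  rw [← Fintype.sum_equiv (Fin.snocEquiv fun _ ↦ A) _ f fun _ ↦ rfl, Fintype.sum_prod_type_right]
  rfl

theorem Fin.sum_univ_pi_succ_eq_sum_cons {A M : Type*} [Fintype A] [AddCommMonoid M] {n : ℕ}
    (f : (Fin (n + 1) → A) → M) :
    ∑ u, f u = ∑ v : Fin n → A, ∑ a, f (Fin.cons a v) := by
  rw [← Fintype.sum_equiv (Fin.consEquiv fun _ ↦ A) _ f fun _ ↦ rfl, Fintype.sum_prod_type_right]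
  rfl

theorem sum_measureReal_inter_preimage_singleton {α β : Type*} [MeasurableSpace α]
    [MeasurableSpace β] [MeasurableSingletonClass β] [Fintype β] (ν : Measure α)
    [IsFiniteMeasure ν]
    {s : Set α} (hs : MeasurableSet s) {f : α → β} (hf : Measurable f) :
    ∑ b, ν.real (s ∩ f ⁻¹' {b}) = ν.real s := by
  have hcover : ⋃ b, s ∩ f ⁻¹' {b} = s := by
    ext x
    simp
  rw [← measureReal_iUnion_fintype (fun b c hbc ↦ (pairwise_disjoint_fiber f hbc).mono
      Set.inter_subset_right Set.inter_subset_right)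
      fun b ↦ hs.inter (hf (measurableSet_singleton b)), hcover]

section Cylinder

variable {A : Type*}

def cylSet {L : ℕ} (w : Fin L → A) : Set (ℕ → A) :=
  {x | ∀ i : Fin L, x i = w i}

theorem cylSet_snoc {L : ℕ} (w : Fin L → A) (b : A) :
    cylSet (Fin.snoc w b : Fin (L + 1) → A) = cylSet w ∩ (fun x ↦ x L) ⁻¹' {b} := by
  ext x
  simp [cylSet, Fin.forall_fin_succ', Fin.snoc_castSucc, and_comm]

theorem cylSet_cons {L : ℕ} (a : A) (w : Fin L → A) :
    cylSet (Fin.cons a w : Fin (L + 1) → A) = shift ⁻¹' cylSet w ∩ (fun x ↦ x 0) ⁻¹' {a} := by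
  ext x
  simp [cylSet, Fin.forall_fin_succ, shift, and_comm]

variable [MeasurableSpace A]

theorem cylP_eq_measureReal (μ : Measure (ℕ → A)) {L : ℕ} (w : Fin L → A) :
    cylP μ w = μ.real (cylSet w) := rfl

theorem cylP_nonneg (μ : Measure (ℕ → A)) {L : ℕ} (w : Fin L → A) : 0 ≤ cylP μ w :=
  ENNReal.toReal_nonneg

variable [MeasurableSingletonClass A]

theorem measurableSet_cylSet {L : ℕ} (w : Fin L → A) : MeasurableSet (cylSet w) := by
  rw [cylSet, Set.ofPred_forall]
  exact MeasurableSet.iInter fun i : Fin L ↦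
    (measurable_pi_apply i.1 : Measurable fun x : ℕ → A ↦ x i) (measurableSet_singleton (w i))

variable [Fintype A] (μ : Measure (ℕ → A)) [IsFiniteMeasure μ]

theorem sum_cylP_snoc {L : ℕ} (w : Fin L → A) :
    ∑ b, cylP μ (Fin.snoc w b : Fin (L + 1) → A) = cylP μ w := by
  simp only [cylP_eq_measureReal, cylSet_snoc]
  exact sum_measureReal_inter_preimage_singleton μ (measurableSet_cylSet w)
    (measurable_pi_apply L)

theorem sum_cylP_cons (hstat : MeasurePreserving shift μ μ) {L : ℕ} (w : Fin L → A) :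
    ∑ a, cylP μ (Fin.cons a w : Fin (L + 1) → A) = cylP μ w := by
  simp only [cylP_eq_measureReal, cylSet_cons]
  rw [sum_measureReal_inter_preimage_singleton μ (hstat.measurable (measurableSet_cylSet w))
    (measurable_pi_apply 0), hstat.measureReal_preimage (measurableSet_cylSet w).nullMeasurableSet]

theorem cylP_le_init {L : ℕ} (u : Fin (L + 1) → A) : cylP μ u ≤ cylP μ (Fin.init u) := by
  conv_lhs => rw [← Fin.snoc_init_self u]
  rw [← sum_cylP_snoc μ (Fin.init u)]
  exact single_le_sum (fun b _ ↦ cylP_nonneg μ _) (mem_univ (u (Fin.last L)))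

theorem cylP_le_tail (hstat : MeasurePreserving shift μ μ) {L : ℕ} (u : Fin (L + 1) → A) :
    cylP μ u ≤ cylP μ (Fin.tail u) := by
  conv_lhs => rw [← Fin.cons_self_tail u]
  rw [← sum_cylP_cons μ hstat (Fin.tail u)]
  exact single_le_sum (fun a _ ↦ cylP_nonneg μ (Fin.cons a (Fin.tail u) : Fin (L + 1) → A))
    (mem_univ (u 0))

theorem sum_cylP_mul_init {L : ℕ} (g : (Fin L → A) → ℝ) :
    ∑ u : Fin (L + 1) → A, cylP μ u * g (Fin.init u) = ∑ v, cylP μ v * g v := by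
  simp_rw [Fin.sum_univ_pi_succ_eq_sum_snoc, Fin.init_snoc, ← sum_mul, sum_cylP_snoc]

theorem sum_cylP_mul_tail (hstat : MeasurePreserving shift μ μ) {L : ℕ} (g : (Fin L → A) → ℝ) :
    ∑ u : Fin (L + 1) → A, cylP μ u * g (Fin.tail u) = ∑ v, cylP μ v * g v := by
  simp_rw [Fin.sum_univ_pi_succ_eq_sum_cons, Fin.tail_cons, ← sum_mul, sum_cylP_cons μ hstat]

theorem sum_cylP_tail_mul_init_div_le (L : ℕ) :
    ∑ u : Fin (L + 2) → A,
        cylP μ (Fin.tail u) * cylP μ (Fin.init u) / cylP μ (Fin.init (Fin.tail u))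
      ≤ ∑ u : Fin (L + 2) → A, cylP μ u := by
  simp_rw [Fin.sum_univ_pi_succ_eq_sum_snoc (n := L + 1), Fin.init_snoc,
    Fin.tail_snoc_eq_snoc_tail, Fin.init_snoc, ← sum_div, ← sum_mul, sum_cylP_snoc]
  gcongr with v
  rw [mul_comm, mul_div_assoc]
  exact mul_le_of_le_one_right measureReal_nonneg (div_self_le_one _)

end Cylinder

section Entropy

variable {A : Type*} [MeasurableSpace A] [Fintype A] (μ : Measure (ℕ → A))

theorem blockH_eq_neg_sum_mul_log_div (L : ℕ) :
    blockH μ L = -(∑ w : Fin L → A, cylP μ w * log (cylP μ w)) / log 2 := by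
  simp_rw [blockH, logb, neg_div, sum_div, mul_div_assoc]

variable [MeasurableSingletonClass A] [IsFiniteMeasure μ]

/-- Strong subadditivity: the conditional mutual information of the first and last symbols of an
`(L + 2)`-block given the middle `L` symbols is nonnegative (Gibbs' inequality, summed). -/
theorem two_mul_sum_mul_log_cylP_le (hstat : MeasurePreserving shift μ μ) (L : ℕ) :
    2 * ∑ v : Fin (L + 1) → A, cylP μ v * log (cylP μ v)
      ≤ ∑ u : Fin (L + 2) → A, cylP μ u * log (cylP μ u)
        + ∑ w : Fin L → A, cylP μ w * log (cylP μ w) := by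
  have hgibbs := sum_le_sum (s := univ) fun (u : Fin (L + 2) → A) _ ↦ sub_mul_div_le_mul_log
    (cylP_nonneg μ u) (cylP_le_tail μ hstat u) (cylP_le_init μ u) (cylP_le_init μ (Fin.tail u))
  have htail : ∑ u : Fin (L + 2) → A, cylP μ u * log (cylP μ (Fin.tail u))
      = ∑ v : Fin (L + 1) → A, cylP μ v * log (cylP μ v) :=
    sum_cylP_mul_tail μ hstat fun v ↦ log (cylP μ v)
  have hinit : ∑ u : Fin (L + 2) → A, cylP μ u * log (cylP μ (Fin.init u))
      = ∑ v : Fin (L + 1) → A, cylP μ v * log (cylP μ v) :=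
    sum_cylP_mul_init μ fun v ↦ log (cylP μ v)
  have hmid : ∑ u : Fin (L + 2) → A, cylP μ u * log (cylP μ (Fin.init (Fin.tail u)))
      = ∑ w : Fin L → A, cylP μ w * log (cylP μ w) :=
    (sum_cylP_mul_tail μ hstat fun v ↦ log (cylP μ (Fin.init v))).trans
      (sum_cylP_mul_init μ fun w ↦ log (cylP μ w))
  simp only [mul_add, mul_sub, sum_add_distrib, sum_sub_distrib, htail, hinit, hmid]
    at hgibbs
  linarith [sum_cylP_tail_mul_init_div_le μ L]

theorem blockH_add_two_add_blockH_le (hstat : MeasurePreserving shift μ μ) (L : ℕ) :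
    blockH μ (L + 2) + blockH μ L ≤ 2 * blockH μ (L + 1) := by
  simp only [blockH_eq_neg_sum_mul_log_div]
  rw [← add_div, mul_div_assoc', div_le_div_iff_of_pos_right (log_pos one_lt_two)]
  linarith [two_mul_sum_mul_log_cylP_le μ hstat L]

end Entropy

theorem excess_entropy_eq_weighted_second_difference_general
    {A : Type*} [MeasurableSpace A] [MeasurableSingletonClass A] [Fintype A]
    (μ : Measure (ℕ → A)) [IsProbabilityMeasure μ]
    (hstat : MeasurePreserving (shift (A := A)) μ μ)
    (hμ : ℝ)
    (E : ℝ)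
    (hE : Tendsto (fun N : ℕ => ∑ L ∈ Finset.range N, (blockH μ (L + 1) - blockH μ L - hμ))
      atTop (nhds E)) :
    Tendsto (fun N : ℕ => ∑ L ∈ Finset.range N,
        ((L : ℝ) + 1) * (blockH μ (L + 2) - 2 * blockH μ (L + 1) + blockH μ L))
      atTop (nhds (-E)) := by
  have hanti : Antitone fun L ↦ blockH μ (L + 1) - blockH μ L - hμ :=
    antitone_nat_of_succ_le fun L ↦ by linarith [blockH_add_two_add_blockH_le μ hstat L]
  convert hanti.tendsto_sum_range_natCast_add_one_mul_sub hE using 4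
  ring

/-- If the excess entropy `E = Σ_{L=1}^∞ [h_μ(L) - h_μ]` converges, then
`Σ_{L=2}^∞ (L-1)·[H(L) - 2H(L-1) + H(L-2)]` converges and `E` equals minus this sum. -/
theorem excess_entropy_eq_weighted_second_difference
    {A : Type*} [MeasurableSpace A] [MeasurableSingletonClass A] [Fintype A]
    (hA : 2 ≤ Fintype.card A)
    (μ : Measure (ℕ → A)) [IsProbabilityMeasure μ]
    (hstat : MeasurePreserving (shift (A := A)) μ μ)
    (hμ : ℝ) (hrate : Tendsto (fun L : ℕ => blockH μ L / L) atTop (nhds hμ))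
    (E : ℝ)
    (hE : Tendsto (fun N : ℕ => ∑ L ∈ Finset.range N, (blockH μ (L + 1) - blockH μ L - hμ))
      atTop (nhds E)) :
    Tendsto (fun N : ℕ => ∑ L ∈ Finset.range N,
        ((L : ℝ) + 1) * (blockH μ (L + 2) - 2 * blockH μ (L + 1) + blockH μ L))
      atTop (nhds (-E)) :=
  excess_entropy_eq_weighted_second_difference_general μ hstat hμ E hE
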